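/- Let xs < xt be integers, C ≥ 0 a real number, and f : ℤ → ℝ a function satisfying the Ameso(C) condition on [xs,xt]. Suppose there exist x' ∈ [xs,xt] and z ∈ [xs,xt] with xs ≤ z < x' such that f(z) − f(x') ≥ C. Then min over y ∈ [z, xt] of f(y) equals min over y ∈ [xs, xt] of f(y). -/

import Mathlib

/-- Ceiling of `(x+y)/2` as a rational. -/
def mceil (x y : ℤ) : ℤ := ⌈((x : ℚ) + (y : ℚ)) / 2⌉

/-- Floor of `(x+y)/2` as a rational. -/
def mfloor (x y : ℤ) : ℤ := ⌊((x : ℚ) + (y : ℚ)) / 2⌋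

/-!
Points left of `z` cannot lower the minimum, because `f y ≥ f z - C ≥ f x'` for every `y < z`.
To see this, let `m` be the leftmost maximiser of `f` strictly between `y` and `x'` and reflect
across `m`. If `m` is left of the midpoint, the mirror image of `y` lies in that open interval and
the Ameso inequality gives `f y ≥ f m - C`; if `m` is the midpoint, the Ameso inequality for
`y, x'` and `f x' ≤ f z - C` give `f y ≥ f m`; if `m` is right of the midpoint, the mirror image
of `x'` is a point left of `m` where `f` is at least `f m`, contradicting the choice of `m`.
-/

lemma half_add_eq_of_add_eq {x y k : ℤ} (h : x + y = 2 * k) : ((x : ℚ) + y) / 2 = k := by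
  rw [← Int.cast_add, h]; push_cast; ring

lemma mceil_eq_of_add_eq {x y k : ℤ} (h : x + y = 2 * k) : mceil x y = k := by
  rw [mceil, half_add_eq_of_add_eq h, Int.ceil_intCast]

lemma mfloor_eq_of_add_eq {x y k : ℤ} (h : x + y = 2 * k) : mfloor x y = k := by
  rw [mfloor, half_add_eq_of_add_eq h, Int.floor_intCast]

lemma Finset.exists_leftmost_max_image {α β : Type*} [LinearOrder α] [LinearOrder β]
    (s : Finset α) (f : α → β) (hs : s.Nonempty) :
    ∃ m ∈ s, (∀ x ∈ s, f x ≤ f m) ∧ ∀ x ∈ s, x < m → f x < f m := by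
  classical
  set t := s.filter fun x => ∀ y ∈ s, f y ≤ f x
  have ht : t.Nonempty := by
    obtain ⟨m, hm, hmax⟩ := s.exists_max_image f hs
    exact ⟨m, Finset.mem_filter.2 ⟨hm, hmax⟩⟩
  obtain ⟨hm, hmax⟩ := Finset.mem_filter.1 (t.min'_mem ht)
  refine ⟨t.min' ht, hm, hmax, fun x hx hlt => (hmax x hx).lt_of_ne fun hfx => ?_⟩
  exact (t.min'_le x (Finset.mem_filter.2 ⟨hx, fun y hy => hfx ▸ hmax y hy⟩)).not_gt hlt

def AmesoOn (C : ℝ) (f : ℤ → ℝ) (l r : ℤ) : Prop :=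
  ∀ x ∈ Finset.Icc l r, ∀ y ∈ Finset.Icc l r, f x + f y + C ≥ f (mceil x y) + f (mfloor x y)

namespace AmesoOn

variable {C : ℝ} {f : ℤ → ℝ} {l r : ℤ}

lemma mono (h : AmesoOn C f l r) {l' r' : ℤ} (hl : l ≤ l') (hr : r' ≤ r) : AmesoOn C f l' r' :=
  fun x hx y hy => h x (Finset.Icc_subset_Icc hl hr hx) y (Finset.Icc_subset_Icc hl hr hy)

lemma two_mul_le (h : AmesoOn C f l r) {x y k : ℤ} (hx : x ∈ Finset.Icc l r)
    (hy : y ∈ Finset.Icc l r) (hk : x + y = 2 * k) : 2 * f k ≤ f x + f y + C := by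
  have := h x hx y hy
  rw [mceil_eq_of_add_eq hk, mfloor_eq_of_add_eq hk] at this
  linarith

lemma sub_le_left_of_le_sub_right (h : AmesoOn C f l r) (hC : 0 ≤ C) {z : ℤ} (hlz : l < z)
    (hzr : z < r) (hgap : C ≤ f z - f r) : f z - C ≤ f l := by
  obtain ⟨m, hm, hmax, hleft⟩ :=
    (Finset.Icc (l + 1) (r - 1)).exists_leftmost_max_image f ⟨z, by simp; omega⟩
  have hm_bounds := Finset.mem_Icc.1 hm
  have hfz : f z ≤ f m := hmax z (by simp; omega)
  have hl : l ∈ Finset.Icc l r := by simp; omega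
  have hr : r ∈ Finset.Icc l r := by simp; omega
  rcases lt_trichotomy (2 * m) (l + r) with hlt | heq | hgt
  · have hmid := h.two_mul_le hl (by simp; omega : 2 * m - l ∈ Finset.Icc l r) (k := m) (by ring)
    have hmirror := hmax (2 * m - l) (by simp; omega)
    linarith
  · have hmid := h.two_mul_le (k := m) hl hr heq.symm
    linarith
  · have hmid := h.two_mul_le (by simp; omega : 2 * m - r ∈ Finset.Icc l r) hr (k := m) (by ring)
    have hmirror := hleft (2 * m - r) (by simp; omega) (by omega)
    linarith

end AmesoOn

/-- Corollary 3: if `z < x'` in `[xs, xt]` and `f(z) - f(x') ≥ C`, then the minimum of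
`f` over `[z, xt]` equals the minimum over `[xs, xt]`. -/
theorem ameso_restrict_left
    (xs xt : ℤ) (C : ℝ) (hC : 0 ≤ C) (f : ℤ → ℝ)
    (hAmeso : ∀ x ∈ Finset.Icc xs xt, ∀ y ∈ Finset.Icc xs xt,
      f x + f y + C ≥ f (mceil x y) + f (mfloor x y))
    (x' z : ℤ) (hx'r : x' ≤ xt) (hzl : xs ≤ z) (hzx' : z < x')
    (hgap : f z - f x' ≥ C) :
    (Finset.Icc z xt).inf' (Finset.nonempty_Icc.2 (by omega)) f
      = (Finset.Icc xs xt).inf' (Finset.nonempty_Icc.2 (by omega)) f := by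
  refine le_antisymm (Finset.le_inf' _ _ fun y hy => ?_)
    (Finset.inf'_mono f (Finset.Icc_subset_Icc hzl le_rfl) _)
  obtain ⟨hsy, hyt⟩ := Finset.mem_Icc.1 hy
  rcases lt_or_ge y z with hyz | hzy
  · have hy_gap : f z - C ≤ f y :=
      AmesoOn.sub_le_left_of_le_sub_right (AmesoOn.mono hAmeso hsy hx'r) hC hyz hzx' hgap
    have hx'_min := Finset.inf'_le f (Finset.mem_Icc.2 ⟨hzx'.le, hx'r⟩)
    linarith
  · exact Finset.inf'_le f (Finset.mem_Icc.2 ⟨hzy, hyt⟩)
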